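/- arXiv:2308.06044 — 2 statements merged into one kernel-verified Lean document; each statement's English description precedes it below -/
import Mathlib

section
/- Let k, q ≥ 1 and let F ∈ GL^k_q. Then for each m ≥ 0 there is a formula φ_m ∈ GC^k_q such that for every k-labelled graph G whose set of assigned labels contains the set of assigned labels of F, hom(F,G) = m if and only if G ⊨ φ_m. -/
set_option maxHeartbeats 1000000

/-! ## Bundled finite simple graphs and homomorphism counting -/

/-- A bundled finite simple graph (vertex set `Fin n`). -/
abbrev GraphB : Type := Σ n : ℕ, SimpleGraph (Fin n)

/-- The number of graph homomorphisms from `F` to `G`. -/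
noncomputable def homCount {V W : Type*} (F : SimpleGraph V) (G : SimpleGraph W) : ℕ :=
  Set.ncard {f : V → W | ∀ ⦃u v⦄, F.Adj u v → G.Adj (f u) (f v)}

/-- `G` and `H` are homomorphism indistinguishable over the class `𝓕`. -/
def HomIndist (𝓕 : Set GraphB) {V W : Type*} (G : SimpleGraph V) (H : SimpleGraph W) : Prop :=
  ∀ A ∈ 𝓕, homCount A.2 G = homCount A.2 H

/-- The homomorphism distinguishing closure of the class `𝓕`. -/
def hdCl (𝓕 : Set GraphB) : Set GraphB :=
  {A | ∀ G H : GraphB, HomIndist 𝓕 G.2 H.2 → homCount A.2 G.2 = homCount A.2 H.2}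

/-! ## Pebble forest covers and the class `T^k_q` -/

/-- A `k`-pebble forest cover of depth at most `q`.  The rooted forest is encoded by its
ancestor (partial) order `le`, in which the set of ancestors of any vertex is a chain. -/
structure PebbleForestCover {V : Type*} (G : SimpleGraph V) (k q : ℕ) where
  le : V → V → Prop
  le_refl : ∀ v, le v v
  le_antisymm : ∀ u v, le u v → le v u → u = v
  le_trans : ∀ u v w, le u v → le v w → le u w
  downChain : ∀ u v w, le u w → le v w → le u v ∨ le v u
  peb : V → Fin k
  cover : ∀ ⦃u v⦄, G.Adj u v → le u v ∨ le v u
  pebbleCond : ∀ ⦃u v w⦄, G.Adj u v → le u v → le u w → le w v → u ≠ w → peb u ≠ peb w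
  heightLE : ∀ v, Set.ncard {u | le u v} ≤ q

def HasPFC {V : Type*} (G : SimpleGraph V) (k q : ℕ) : Prop :=
  Nonempty (PebbleForestCover G k q)

/-- The class `T^k_q` of graphs admitting a `k`-pebble forest cover of depth at most `q`. -/
def Tclass (k q : ℕ) : Set GraphB := {G | HasPFC G.2 k q}

/-! ## Forest covers, treedepth, tree decompositions, treewidth -/

/-- `G` has a forest cover of height at most `q`, i.e. treedepth at most `q`. -/
def HasForestCover {V : Type*} (G : SimpleGraph V) (q : ℕ) : Prop :=
  ∃ le : V → V → Prop,
    (∀ v, le v v) ∧ (∀ u v, le u v → le v u → u = v) ∧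
    (∀ u v w, le u v → le v w → le u w) ∧
    (∀ u v w, le u w → le v w → le u v ∨ le v u) ∧
    (∀ ⦃u v⦄, G.Adj u v → le u v ∨ le v u) ∧
    (∀ v, Set.ncard {u | le u v} ≤ q)

/-- The class `TD_q` of graphs of treedepth at most `q`. -/
def TDclass (q : ℕ) : Set GraphB := {G | HasForestCover G.2 q}

/-- A tree decomposition of `G`. -/
structure TreeDecomp {V : Type*} (G : SimpleGraph V) where
  n : ℕ
  T : SimpleGraph (Fin n)
  isTree : T.IsTree
  bag : Fin n → Set V
  coversVerts : ∀ v : V, ∃ t, v ∈ bag t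
  coversEdges : ∀ ⦃u v⦄, G.Adj u v → ∃ t, u ∈ bag t ∧ v ∈ bag t
  bagsConnected : ∀ v : V, (SimpleGraph.induce {t | v ∈ bag t} T).Connected

/-- The decomposition has width at most `w`. -/
def TreeDecomp.widthLE {V : Type*} {G : SimpleGraph V} (d : TreeDecomp G) (w : ℕ) : Prop :=
  ∀ t, (d.bag t).ncard ≤ w + 1

/-- `t` lies on the (unique) path from `r` to `s` in the tree `d.T`,
i.e. `t` is an ancestor of `s` when `d.T` is rooted at `r`. -/
def TreeDecomp.anc {V : Type*} {G : SimpleGraph V} (d : TreeDecomp G) (r t s : Fin d.n) : Prop :=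
  ∀ w : d.T.Walk r s, t ∈ w.support

/-- The decomposition has depth at most `q`: for some root `r`, for every node `s`,
the union of the bags of ancestors of `s` has at most `q` vertices. -/
def TreeDecomp.depthLE {V : Type*} {G : SimpleGraph V} (d : TreeDecomp G) (q : ℕ) : Prop :=
  ∃ r : Fin d.n, ∀ s : Fin d.n, (⋃ t ∈ {t | d.anc r t s}, d.bag t).ncard ≤ q

/-- The class `TW_w` of graphs of treewidth at most `w`. -/
def TWclass (w : ℕ) : Set GraphB := {G | ∃ d : TreeDecomp G.2, d.widthLE w}

/-! ## Minors and disjoint unions -/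

/-- `H` is a minor of `G`: there are pairwise disjoint connected nonempty branch sets in `G`,
one for each vertex of `H`, such that edges of `H` are realised between branch sets. -/
def IsMinor {W V : Type*} (H : SimpleGraph W) (G : SimpleGraph V) : Prop :=
  ∃ φ : V → Option W,
    (∀ w : W, (SimpleGraph.induce {v | φ v = some w} G).Connected) ∧
    (∀ ⦃w₁ w₂⦄, H.Adj w₁ w₂ → ∃ v₁ v₂, φ v₁ = some w₁ ∧ φ v₂ = some w₂ ∧ G.Adj v₁ v₂)

/-- The disjoint union of two simple graphs. -/
def sumGraph {V W : Type*} (G : SimpleGraph V) (H : SimpleGraph W) : SimpleGraph (V ⊕ W) where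
  Adj x y :=
    match x, y with
    | Sum.inl a, Sum.inl b => G.Adj a b
    | Sum.inr a, Sum.inr b => H.Adj a b
    | _, _ => False
  symm := by
    refine ⟨?_⟩
    rintro (a | a) (b | b) h
    · exact G.adj_symm h
    · exact h.elim
    · exact h.elim
    · exact H.adj_symm h
  loopless := by
    refine ⟨?_⟩
    rintro (a | a) h
    · exact G.irrefl h
    · exact H.irrefl h

/-! ## Cops-and-robber games -/

/-- A robber move from `v` to `u`: a walk in `G` none of whose vertices lies in `A`
(`A` will be `X ∩ Y` for old/new cop positions `X`, `Y` on `G` plus a `k`-clique). -/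
def RobberMove {V : Type*} {k : ℕ} (G : SimpleGraph V) (A : Finset (V ⊕ Fin k)) (v u : V) :
    Prop :=
  ∃ w : G.Walk v u, ∀ x ∈ w.support, Sum.inl x ∉ A

/-- The initial cop position: all `k` cops on the auxiliary clique. -/
def initPos (V : Type*) [DecidableEq V] (k : ℕ) : Finset (V ⊕ Fin k) :=
  Finset.univ.image Sum.inr

/-- In the (non-monotone) cops-and-robber game on `G` with `k` cops, from cop position `X`
and robber position `v`, Cops can catch the robber within `q` further rounds. -/
def CopsCatch {V : Type*} [DecidableEq V] (G : SimpleGraph V) (k : ℕ) :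
    ℕ → Finset (V ⊕ Fin k) → V → Prop
  | 0, _, _ => False
  | q + 1, X, v =>
      ∃ Y : Finset (V ⊕ Fin k), Y.card = k ∧ (X ∩ Y).card = k - 1 ∧
        ∀ u : V, RobberMove G (X ∩ Y) v u → (Sum.inl u ∈ Y ∨ CopsCatch G k q Y u)

/-- Monotone variant: Cops may only move so that the robber escape space does not grow. -/
def MonCopsCatch {V : Type*} [DecidableEq V] (G : SimpleGraph V) (k : ℕ) :
    ℕ → Finset (V ⊕ Fin k) → V → Prop
  | 0, _, _ => False
  | q + 1, X, v =>
      ∃ Y : Finset (V ⊕ Fin k), Y.card = k ∧ (X ∩ Y).card = k - 1 ∧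
        (∀ u : V, RobberMove G (X ∩ Y) v u → RobberMove G X v u) ∧
        ∀ u : V, RobberMove G (X ∩ Y) v u → (Sum.inl u ∈ Y ∨ MonCopsCatch G k q Y u)

/-- Robber can evade capture for `q` further rounds from cop position `X`, robber at `v`. -/
def RobberEsc {V : Type*} [DecidableEq V] (G : SimpleGraph V) (k : ℕ) :
    ℕ → Finset (V ⊕ Fin k) → V → Prop
  | 0, _, _ => True
  | q + 1, X, v =>
      ∀ Y : Finset (V ⊕ Fin k), Y.card = k → (X ∩ Y).card = k - 1 →
        ∃ u : V, RobberMove G (X ∩ Y) v u ∧ Sum.inl u ∉ Y ∧ RobberEsc G k q Y u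

/-- Cops has a winning strategy in the `q`-round `k`-cops-and-robber game on `G`. -/
def CopsWinGame {V : Type*} [DecidableEq V] (G : SimpleGraph V) (k q : ℕ) : Prop :=
  ∀ v : V, CopsCatch G k q (initPos V k) v

/-- Cops has a winning strategy in the monotone `q`-round `k`-cops-and-robber game on `G`. -/
def MonCopsWinGame {V : Type*} [DecidableEq V] (G : SimpleGraph V) (k q : ℕ) : Prop :=
  ∀ v : V, MonCopsCatch G k q (initPos V k) v

/-- Robber has a winning strategy in the `q`-round `k`-cops-and-robber game on `G`. -/
def RobberWinsGame {V : Type*} [DecidableEq V] (G : SimpleGraph V) (k q : ℕ) : Prop :=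
  ∃ v : V, RobberEsc G k q (initPos V k) v

/-- The `h × ℓ` grid graph. -/
def gridGraph (h l : ℕ) : SimpleGraph (Fin h × Fin l) :=
  (SimpleGraph.pathGraph h).boxProd (SimpleGraph.pathGraph l)

/-! ## The CFI-like construction `G_U` -/

/-- Vertices of `G_U`: pairs `(v, S)` with `S` a set of edges incident to `v` whose
parity matches `|{v} ∩ U|`. -/
def CFIvert {V : Type*} (G : SimpleGraph V) (U : Set V) : Type _ :=
  {p : V × Set (Sym2 V) // p.2 ⊆ G.incidenceSet p.1 ∧ (Even p.2.ncard ↔ p.1 ∉ U)}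

/-- The CFI-like graph `G_U` of Roberson. -/
def CFI {V : Type*} (G : SimpleGraph V) (U : Set V) : SimpleGraph (CFIvert G U) where
  Adj x y := G.Adj x.1.1 y.1.1 ∧ s(x.1.1, y.1.1) ∉ symmDiff x.1.2 y.1.2
  symm := by
    refine ⟨?_⟩
    rintro x y ⟨h1, h2⟩
    refine ⟨h1.symm, ?_⟩
    rw [Sym2.eq_swap, symmDiff_comm]
    exact h2
  loopless := by
    refine ⟨?_⟩
    rintro x ⟨h1, _⟩
    exact G.irrefl h1

/-! ## Counting first-order logic -/

/-- Formulae of first-order counting logic `C` with variables indexed by `α`. -/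
inductive CForm (α : Type) : Type
  | eq : α → α → CForm α
  | adj : α → α → CForm α
  | not : CForm α → CForm α
  | or : CForm α → CForm α → CForm α
  | and : CForm α → CForm α → CForm α
  | count : ℕ → α → CForm α → CForm α

namespace CForm

variable {α : Type} [DecidableEq α]

/-- Quantifier rank. -/
def qr : CForm α → ℕ
  | eq _ _ => 0
  | adj _ _ => 0
  | not φ => qr φ
  | or φ ψ => max (qr φ) (qr ψ)
  | and φ ψ => max (qr φ) (qr ψ)
  | count _ _ φ => qr φ + 1

/-- Free variables. -/
def freeVars : CForm α → Finset α
  | eq i j => {i, j}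
  | adj i j => {i, j}
  | not φ => freeVars φ
  | or φ ψ => freeVars φ ∪ freeVars ψ
  | and φ ψ => freeVars φ ∪ freeVars ψ
  | count _ i φ => (freeVars φ).erase i

/-- Satisfaction in a simple graph, relative to a partial variable assignment. -/
def Sat {V : Type*} (G : SimpleGraph V) : CForm α → (α → Option V) → Prop
  | eq i j, a => ∃ v, a i = some v ∧ a j = some v
  | adj i j, a => ∃ v w, a i = some v ∧ a j = some w ∧ G.Adj v w
  | not φ, a => ¬ Sat G φ a
  | or φ ψ, a => Sat G φ a ∨ Sat G ψ a
  | and φ ψ, a => Sat G φ a ∧ Sat G ψ a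
  | count t i φ, a =>
      ∃ s : Finset V, t ≤ s.card ∧ ∀ v ∈ s, Sat G φ (fun j => if j = i then some v else a j)

/-- Guarded formulae: every quantifier occurs as `∃^{≥t} y (E x y ∧ ψ)` with `x ≠ y`. -/
def Guarded : CForm α → Prop
  | count _ y (and (adj x y') χ) => y' = y ∧ x ≠ y ∧ Guarded χ
  | count _ _ _ => False
  | eq _ _ => True
  | adj _ _ => True
  | not φ => Guarded φ
  | or φ ψ => Guarded φ ∧ Guarded ψ
  | and φ ψ => Guarded φ ∧ Guarded ψ

end CForm

/-! ## Labelled graphs, products, construction trees -/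

/-- A `k`-labelled finite graph. -/
structure LGraph (k : ℕ) : Type 1 where
  V : Type
  fin : Finite V
  G : SimpleGraph V
  ν : Fin k → Option V

namespace LGraph

variable {k : ℕ}

/-- Number of homomorphisms between `k`-labelled graphs. -/
noncomputable def lhomCount (F G : LGraph k) : ℕ :=
  Set.ncard {f : F.V → G.V |
    (∀ ⦃u v⦄, F.G.Adj u v → G.G.Adj (f u) (f v)) ∧
    ∀ i v, F.ν i = some v → ∃ w, G.ν i = some w ∧ f v = w}

/-- Remove label `i`. -/
def removeLabel (A : LGraph k) (i : Fin k) : LGraph k :=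
  { A with ν := fun j => if j = i then none else A.ν j }

/-- Every vertex carries at least one label. -/
def FullyLabelled (A : LGraph k) : Prop := ∀ v : A.V, ∃ i, A.ν i = some v

/-- Adjacency on the disjoint sum of two labelled graphs. -/
def sumAdj (A B : LGraph k) : A.V ⊕ B.V → A.V ⊕ B.V → Prop
  | Sum.inl u, Sum.inl v => A.G.Adj u v
  | Sum.inr u, Sum.inr v => B.G.Adj u v
  | _, _ => False

lemma sumAdj_symm (A B : LGraph k) : ∀ x y, sumAdj A B x y → sumAdj A B y x := by
  rintro (u | u) (v | v) h
  · exact A.G.adj_symm h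
  · exact h.elim
  · exact h.elim
  · exact B.G.adj_symm h

/-- The gluing relation: vertices carrying the same label get identified. -/
def glue (A B : LGraph k) : A.V ⊕ B.V → A.V ⊕ B.V → Prop := fun x y =>
  ∃ i : Fin k, (A.ν i).map Sum.inl = some x ∧ (B.ν i).map Sum.inr = some y

/-- The product of two `k`-labelled graphs: disjoint union, identify equally labelled
vertices, suppress loops and parallel edges. -/
def product (A B : LGraph k) : LGraph k where
  V := Quot (glue A B)
  fin := by
    haveI := A.fin
    haveI := B.fin
    exact Finite.of_surjective (Quot.mk _) (fun x => Quot.inductionOn x fun a => ⟨a, rfl⟩)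
  G :=
    { Adj := fun x y =>
        x ≠ y ∧ ∃ u v, Quot.mk _ u = x ∧ Quot.mk _ v = y ∧ sumAdj A B u v
      symm := by
        refine ⟨?_⟩
        rintro x y ⟨hne, u, v, hu, hv, h⟩
        exact ⟨hne.symm, v, u, hv, hu, sumAdj_symm A B u v h⟩
      loopless := ⟨fun x h => h.1 rfl⟩ }
  ν := fun i =>
    ((A.ν i).map fun v => Quot.mk _ (Sum.inl v)).orElse
      fun _ => (B.ν i).map fun v => Quot.mk _ (Sum.inr v)

/-- Isomorphism of labelled graphs. -/
def LIso (A B : LGraph k) : Prop :=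
  ∃ e : A.G ≃g B.G, ∀ i, (A.ν i).map (fun v => e v) = B.ν i

end LGraph

/-- `k`-construction trees: leaves carry (fully labelled) graphs, unary nodes remove
one label, binary nodes take products. -/
inductive CT (k : ℕ) : Type 1
  | leaf : LGraph k → CT k
  | elim : Fin k → CT k → CT k
  | prod : CT k → CT k → CT k

namespace CT

variable {k : ℕ}

/-- The labelled graph constructed by a construction tree. -/
def graphOf : CT k → LGraph k
  | leaf A => A
  | elim i t => (graphOf t).removeLabel i
  | prod t₁ t₂ => (graphOf t₁).product (graphOf t₂)

/-- Validity: leaves are fully labelled and elimination nodes remove an assigned label. -/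
def Valid : CT k → Prop
  | leaf A => A.FullyLabelled
  | elim i t => Valid t ∧ (graphOf t).ν i ≠ none
  | prod t₁ t₂ => Valid t₁ ∧ Valid t₂

/-- Guarded validity: labels may only be removed from vertices with a labelled neighbour. -/
def GuardedValid : CT k → Prop
  | leaf A => A.FullyLabelled
  | elim i t => GuardedValid t ∧
      ∃ v, (graphOf t).ν i = some v ∧
        ∃ j w, (graphOf t).ν j = some w ∧ (graphOf t).G.Adj v w
  | prod t₁ t₂ => GuardedValid t₁ ∧ GuardedValid t₂

/-- The elimination depth: maximal number of elimination nodes on a root-to-leaf path. -/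
def elimDepth : CT k → ℕ
  | leaf _ => 0
  | elim _ t => elimDepth t + 1
  | prod t₁ t₂ => max (elimDepth t₁) (elimDepth t₂)

end CT

/-- The class `L^k_q` of `k`-labelled graphs admitting a `k`-construction tree of
elimination depth at most `q`. -/
def Lclass (k q : ℕ) : Set (LGraph k) :=
  {F | ∃ t : CT k, CT.Valid t ∧ CT.elimDepth t ≤ q ∧ LGraph.LIso (CT.graphOf t) F}

/-- The class `GL^k_q`: as `L^k_q`, but labels may only be removed from vertices with a
labelled neighbour. -/
def GLclass (k q : ℕ) : Set (LGraph k) :=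
  {F | ∃ t : CT k, CT.GuardedValid t ∧ CT.elimDepth t ≤ q ∧ LGraph.LIso (CT.graphOf t) F}

/-- The class `GE^k_q` of unlabelled graphs underlying graphs in `GL^k_q`. -/
def GEclass (k q : ℕ) : Set GraphB :=
  {G | ∃ F ∈ GLclass k q, Nonempty (F.G ≃g G.2)}

/-! ## The bijective pebble game -/

/-- `γ` is a partial isomorphism between `G` and `H`. -/
def PartialIso {V W : Type*} (G : SimpleGraph V) (H : SimpleGraph W) {k : ℕ}
    (γ : Fin k → Option (V × W)) : Prop :=
  ∀ i j vi wi vj wj, γ i = some (vi, wi) → γ j = some (vj, wj) →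
    ((vi = vj ↔ wi = wj) ∧ (G.Adj vi vj ↔ H.Adj wi wj))

/-- Duplicator wins the `q`-round bijective `k`-pebble game on `G` and `H` from position `γ`. -/
def DupWins {V W : Type*} (G : SimpleGraph V) (H : SimpleGraph W) (k : ℕ) :
    ℕ → (Fin k → Option (V × W)) → Prop
  | 0, γ => PartialIso G H γ
  | q + 1, γ => PartialIso G H γ ∧
      ∀ p : Fin k, ∃ f : V ≃ W, ∀ v : V,
        DupWins G H k q (fun j => if j = p then some (v, f v) else γ j)
/-! Induction along a guarded construction tree. Instead of `hom(F, G)` we track the number of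
label-respecting maps that preserve every edge with an unlabelled endpoint: edges between two
labelled vertices only contribute a quantifier-free factor. This count is multiplicative under
products, so a product node becomes a disjunction over the factorisations of `m`. Removing a label
from a vertex `x` with a labelled neighbour `y` turns the count into a sum, over the neighbours `w`
of the image of `y`, of the counts with `x ↦ w`; guarded counting quantifiers express such a sum
by fixing, for each value `j ≤ m`, how many neighbours contribute `j`. -/

open Finset

theorem Nat.card_subtype_eq_sum_fiber {α β : Type*} [Finite α] [Fintype β] (p : α → Prop)
    (g : α → β) : Nat.card {a // p a} = ∑ b, Nat.card {a // p a ∧ g a = b} := by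
  classical
  have := Fintype.ofFinite α
  simp only [Nat.card_eq_fintype_card, Fintype.card_subtype]
  rw [card_eq_sum_card_fiberwise (f := g) (t := univ) fun _ _ => mem_univ _]
  simp only [filter_filter]

theorem sum_eq_iff_exists_fiber_cards {W : Type*} [Fintype W] (n : W → ℕ) (m : ℕ) :
    ∑ w, n w = m ↔ (∀ w, n w ≤ m) ∧
      ∃ c : Fin m → Fin (m + 1), ∑ j : Fin m, ((j : ℕ) + 1) * (c j : ℕ) = m ∧
        ∀ j : Fin m, Nat.card {w // n w = j + 1} = c j := by
  classical
  have hcard : ∀ j, Nat.card {w // n w = j} = #{w | n w = j} := fun j => by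
    rw [Nat.card_eq_fintype_card, Fintype.card_subtype]
  have key : (∀ w, n w ≤ m) →
      ∑ w, n w = ∑ j : Fin m, ((j : ℕ) + 1) * Nat.card {w // n w = j + 1} := by
    intro hle
    calc ∑ w, n w = ∑ j ∈ range (m + 1), ∑ w with n w = j, n w :=
          (sum_fiberwise_of_maps_to (fun w _ => mem_range.2 (Nat.lt_succ_of_le (hle w))) _).symm
      _ = ∑ j ∈ range (m + 1), j * #{w | n w = j} := sum_congr rfl fun j _ => by
          rw [sum_congr rfl fun w hw => (mem_filter.1 hw).2, sum_const, smul_eq_mul, mul_comm]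
      _ = ∑ j : Fin m, ((j : ℕ) + 1) * Nat.card {w // n w = j + 1} := by
          rw [sum_range_succ',
            Fin.sum_univ_eq_sum_range (fun j => (j + 1) * Nat.card {w // n w = j + 1})]
          simp only [hcard]
          simp
  constructor
  · rintro rfl
    have hle : ∀ w, n w ≤ ∑ w, n w := fun w =>
      single_le_sum (fun _ _ => Nat.zero_le _) (mem_univ w)
    have hbound : ∀ j : Fin (∑ w, n w), Nat.card {w // n w = j + 1} < ∑ w, n w + 1 := by
      intro j
      refine Nat.lt_succ_of_le ?_
      calc Nat.card {w // n w = j + 1} ≤ ((j : ℕ) + 1) * Nat.card {w // n w = j + 1} :=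
            Nat.le_mul_of_pos_left _ j.succ_pos
        _ ≤ ∑ j : Fin (∑ w, n w), ((j : ℕ) + 1) * Nat.card {w // n w = j + 1} :=
            single_le_sum (f := fun j : Fin _ => ((j : ℕ) + 1) * Nat.card {w // n w = j + 1})
              (fun _ _ => Nat.zero_le _) (mem_univ j)
        _ = ∑ w, n w := (key hle).symm
    exact ⟨hle, fun j => ⟨_, hbound j⟩, (key hle).symm, fun j => rfl⟩
  · rintro ⟨hle, c, hc, hcount⟩
    rw [key hle]
    exact (sum_congr rfl fun j _ => by rw [hcount]).trans hc

theorem exists_forall_ne_imp_apply_ne {α : Type*} [Fintype α] (ρ : α → α) (l : α) :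
    ∃ p, ∀ i, i ≠ l → ρ i ≠ p := by
  classical
  by_contra! h
  have hsurj : Set.SurjOn ρ ↑(univ.erase l) ↑(univ : Finset α) := fun p _ => by
    obtain ⟨i, hi, rfl⟩ := h p
    exact ⟨i, by simp [hi], rfl⟩
  have := card_le_card_of_surjOn ρ hsurj
  rw [card_erase_of_mem (mem_univ l)] at this
  have := card_pos.2 ⟨l, mem_univ l⟩
  omega

namespace CForm

variable {α : Type} {q : ℕ}

/-- `φ ∈ GC_q`; the variables are the elements of `α`. -/
structure IsGC (q : ℕ) (φ : CForm α) : Prop where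
  guarded : Guarded φ
  qr_le : qr φ ≤ q

theorem IsGC.mono {r : ℕ} {φ : CForm α} (h : φ.IsGC q) (hqr : q ≤ r) : φ.IsGC r :=
  ⟨h.guarded, h.qr_le.trans hqr⟩

theorem IsGC.not {φ : CForm α} (h : φ.IsGC q) : (not φ).IsGC q := ⟨h.guarded, h.qr_le⟩

theorem IsGC.and {φ ψ : CForm α} (hφ : φ.IsGC q) (hψ : ψ.IsGC q) : (and φ ψ).IsGC q :=
  ⟨⟨hφ.guarded, hψ.guarded⟩, max_le hφ.qr_le hψ.qr_le⟩

theorem IsGC.or {φ ψ : CForm α} (hφ : φ.IsGC q) (hψ : ψ.IsGC q) : (or φ ψ).IsGC q :=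
  ⟨⟨hφ.guarded, hψ.guarded⟩, max_le hφ.qr_le hψ.qr_le⟩

theorem isGC_eq (q : ℕ) (x y : α) : (eq x y).IsGC q := ⟨trivial, Nat.zero_le q⟩

theorem isGC_adj (q : ℕ) (x y : α) : (adj x y).IsGC q := ⟨trivial, Nat.zero_le q⟩

/-- `∃^{≥t} y (E x y ∧ ψ)`. -/
def gcount (t : ℕ) (x y : α) (ψ : CForm α) : CForm α := count t y (and (adj x y) ψ)

/-- `∃^{=t} y (E x y ∧ ψ)`. -/
def gcountEq (t : ℕ) (x y : α) (ψ : CForm α) : CForm α :=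
  and (gcount t x y ψ) (not (gcount (t + 1) x y ψ))

theorem IsGC.gcount {ψ : CForm α} (h : ψ.IsGC q) (t : ℕ) {x y : α} (hxy : x ≠ y) :
    (gcount t x y ψ).IsGC (q + 1) :=
  ⟨⟨rfl, hxy, h.guarded⟩, by simpa [CForm.gcount, qr] using h.qr_le⟩

theorem IsGC.gcountEq {ψ : CForm α} (h : ψ.IsGC q) (t : ℕ) {x y : α} (hxy : x ≠ y) :
    (gcountEq t x y ψ).IsGC (q + 1) :=
  (h.gcount t hxy).and (h.gcount (t + 1) hxy).not

section

variable [Inhabited α]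

def falsum : CForm α := and (eq default default) (not (eq default default))

def verum : CForm α := not falsum

theorem isGC_falsum (q : ℕ) : (falsum : CForm α).IsGC q :=
  (isGC_eq q _ _).and (isGC_eq q _ _).not

theorem isGC_verum (q : ℕ) : (verum : CForm α).IsGC q := (isGC_falsum q).not

noncomputable def conj {ι : Type*} (s : Finset ι) (φ : ι → CForm α) : CForm α :=
  (s.toList.map φ).foldr and verum

noncomputable def disj {ι : Type*} (s : Finset ι) (φ : ι → CForm α) : CForm α :=
  not (conj s fun i => not (φ i))

theorem IsGC.conj {ι : Type*} {s : Finset ι} {φ : ι → CForm α}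
    (h : ∀ i ∈ s, (φ i).IsGC q) : (conj s φ).IsGC q := by
  suffices ∀ l : List ι, (∀ i ∈ l, (φ i).IsGC q) →
      ((l.map φ).foldr CForm.and verum).IsGC q from
    this _ fun i hi => h i (mem_toList.1 hi)
  intro l hl
  induction l with
  | nil => exact isGC_verum q
  | cons i l ih =>
    exact (hl i List.mem_cons_self).and (ih fun j hj => hl j (List.mem_cons_of_mem _ hj))

theorem IsGC.disj {ι : Type*} {s : Finset ι} {φ : ι → CForm α}
    (h : ∀ i ∈ s, (φ i).IsGC q) : (disj s φ).IsGC q :=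
  (IsGC.conj fun i hi => (h i hi).not).not


def indicator (ψ : CForm α) : ℕ → CForm α
  | 0 => not ψ
  | 1 => ψ
  | _ + 2 => falsum

noncomputable def mul (φ χ : ℕ → CForm α) : ℕ → CForm α
  | 0 => or (φ 0) (χ 0)
  | m + 1 => disj (m + 1).divisorsAntidiagonal fun d => and (φ d.1) (χ d.2)

def countVectors (m : ℕ) : Finset (Fin m → Fin (m + 1)) :=
  Finset.univ.filter fun c => ∑ j : Fin m, ((j : ℕ) + 1) * (c j : ℕ) = m

/-- If `θ` defines, at `y ↦ w`, a value `n w` that vanishes off the neighbours of `x`, then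
`∑ w, n w = m` says: no neighbour has a value above `m`, and for some `c` with
`∑ (j + 1) * c j = m`, exactly `c j` neighbours have value `j + 1`. -/
noncomputable def nbrSum (x y : α) (θ : ℕ → CForm α) (m : ℕ) : CForm α :=
  and (not (gcount 1 x y (conj (Finset.range (m + 1)) fun j => not (θ j))))
    (disj (countVectors m) fun c => conj Finset.univ fun j => gcountEq (c j) x y (θ (j + 1)))

theorem IsGC.indicator {ψ : CForm α} (h : ψ.IsGC q) : ∀ j, (indicator ψ j).IsGC q
  | 0 => h.not
  | 1 => h
  | _ + 2 => isGC_falsum q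

theorem IsGC.mul {φ χ : ℕ → CForm α} (hφ : ∀ j, (φ j).IsGC q)
    (hχ : ∀ j, (χ j).IsGC q) :
    ∀ j, (mul φ χ j).IsGC q
  | 0 => (hφ 0).or (hχ 0)
  | _ + 1 => IsGC.disj fun d _ => (hφ d.1).and (hχ d.2)

theorem IsGC.nbrSum {θ : ℕ → CForm α} (h : ∀ j, (θ j).IsGC q) {x y : α} (hxy : x ≠ y) :
    ∀ m, (nbrSum x y θ m).IsGC (q + 1) := fun _ =>
  ((IsGC.conj fun j _ => (h j).not).gcount 1 hxy).not.and
    (IsGC.disj fun _ _ => IsGC.conj fun j _ => (h (j + 1)).gcountEq _ hxy)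

end

variable [DecidableEq α] {W : Type*} {G : SimpleGraph W} {a : α → Option W}

theorem sat_count [Finite W] {t : ℕ} {y : α} {ψ : CForm α} :
    Sat G (count t y ψ) a ↔
      t ≤ Nat.card {w // Sat G ψ fun j => if j = y then some w else a j} := by
  constructor
  · rintro ⟨s, hts, hs⟩
    calc t ≤ s.card := hts
      _ = Nat.card s := (Nat.card_eq_finsetCard s).symm
      _ ≤ _ := Nat.card_le_card_of_injective (fun w => ⟨w.1, hs w.1 w.2⟩) fun v w h => by
          simp only [Subtype.mk.injEq] at h
          exact Subtype.ext h
  · intro h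
    have := Fintype.ofFinite W
    classical
    refine ⟨univ.filter fun w => Sat G ψ fun j => if j = y then some w else a j, ?_,
      fun w hw => (mem_filter.1 hw).2⟩
    rwa [Nat.card_eq_fintype_card, Fintype.card_subtype] at h

theorem sat_gcount [Finite W] {t : ℕ} {x y : α} {ψ : CForm α} {w₀ : W}
    (hx : a x = some w₀) (hxy : x ≠ y) :
    Sat G (gcount t x y ψ) a ↔
      t ≤ Nat.card {w // G.Adj w₀ w ∧ Sat G ψ fun j => if j = y then some w else a j} := by
  rw [gcount, sat_count]
  refine Iff.of_eq (congrArg _ (Nat.card_congr (Equiv.subtypeEquivRight fun w => ?_)))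
  simp [Sat, hxy, hx]

theorem sat_gcountEq [Finite W] {t : ℕ} {x y : α} {ψ : CForm α} {w₀ : W}
    (hx : a x = some w₀) (hxy : x ≠ y) :
    Sat G (gcountEq t x y ψ) a ↔
      Nat.card {w // G.Adj w₀ w ∧ Sat G ψ fun j => if j = y then some w else a j} = t := by
  rw [gcountEq, Sat, Sat, sat_gcount hx hxy, sat_gcount hx hxy]
  omega

def DefinesNat (G : SimpleGraph W) (a : α → Option W) (φ : ℕ → CForm α) (n : ℕ) : Prop :=
  ∀ j, Sat G (φ j) a ↔ n = j

variable [Inhabited α]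

@[simp] theorem sat_falsum : ¬ Sat G falsum a := fun h => h.2 h.1

@[simp] theorem sat_verum : Sat G verum a := sat_falsum

@[simp] theorem sat_conj {ι : Type*} {s : Finset ι} {φ : ι → CForm α} :
    Sat G (conj s φ) a ↔ ∀ i ∈ s, Sat G (φ i) a := by
  suffices ∀ l : List ι, Sat G ((l.map φ).foldr and verum) a ↔ ∀ i ∈ l, Sat G (φ i) a by
    simp [conj, this]
  intro l
  induction l with
  | nil => simp
  | cons i l ih => simp [Sat, ih]

@[simp] theorem sat_disj {ι : Type*} {s : Finset ι} {φ : ι → CForm α} :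
    Sat G (disj s φ) a ↔ ∃ i ∈ s, Sat G (φ i) a := by
  simp [disj, Sat]

theorem definesNat_indicator {ψ : CForm α} {P : Prop} [Decidable P]
    (h : Sat G ψ a ↔ P) : DefinesNat G a (indicator ψ) (if P then 1 else 0) := by
  rintro (_ | _ | j) <;> by_cases hP : P <;> simp [indicator, Sat, h, hP]

theorem DefinesNat.mul {φ χ : ℕ → CForm α} {x y : ℕ}
    (hφ : DefinesNat G a φ x) (hχ : DefinesNat G a χ y) :
    DefinesNat G a (mul φ χ) (x * y) := by
  rintro (_ | m)
  · simp [CForm.mul, Sat, hφ 0, hχ 0]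
  · simp [CForm.mul, Sat, hφ _, hχ _, eq_comm]

theorem DefinesNat.nbrSum [Fintype W] {x y : α} {θ : ℕ → CForm α} {w₀ : W}
    (hx : a x = some w₀) (hxy : x ≠ y) {n : W → ℕ}
    (hθ : ∀ w, DefinesNat G (fun j => if j = y then some w else a j) θ (n w))
    (hn : ∀ w, n w ≠ 0 → G.Adj w₀ w) :
    DefinesNat G a (nbrSum x y θ) (∑ w, n w) := by
  intro m
  have hbound : (∀ w, n w ≤ m) ↔
      ¬ 1 ≤ Nat.card {w // G.Adj w₀ w ∧ ∀ j < m + 1, ¬ n w = j} := by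
    rw [Nat.one_le_iff_ne_zero, not_not, Finite.card_eq_zero_iff, isEmpty_subtype]
    refine ⟨fun h w ⟨_, hw⟩ => hw _ (Nat.lt_succ_of_le (h w)) rfl, fun h w => ?_⟩
    by_contra hlt
    exact h w ⟨hn w (by omega), fun j hj hwj => by omega⟩
  have hcount : ∀ j : ℕ,
      Nat.card {w // G.Adj w₀ w ∧ n w = j + 1} = Nat.card {w // n w = j + 1} :=
    fun j => Nat.card_congr (Equiv.subtypeEquivRight fun w =>
      ⟨And.right, fun h => ⟨hn w (by omega), h⟩⟩)
  have hθ' : ∀ w j, Sat G (θ j) (fun j => if j = y then some w else a j) ↔ n w = j := hθ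
  rw [sum_eq_iff_exists_fiber_cards, hbound]
  simp only [CForm.nbrSum, Sat, sat_gcount hx hxy, sat_gcountEq hx hxy, sat_conj, sat_disj, hθ',
    Finset.mem_range, hcount, countVectors, Finset.mem_filter, Finset.mem_univ, true_and,
    forall_const]

end CForm

namespace LGraph

variable {k : ℕ} {W : Type*} {G : SimpleGraph W}

def Labelled (A : LGraph k) (u : A.V) : Prop := ∃ i, A.ν i = some u

/-- Edges between two labelled vertices are ignored: their images are fixed by `b`, and ignoring
them keeps the count multiplicative under products, where gluing may collapse such an edge to a
suppressed loop. -/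
structure IsLooseHom (A : LGraph k) (G : SimpleGraph W) (b : Fin k → Option W) (f : A.V → W) :
    Prop where
  map_adj : ∀ ⦃u v⦄, A.G.Adj u v → ¬ (A.Labelled u ∧ A.Labelled v) → G.Adj (f u) (f v)
  map_label : ∀ ⦃i u⦄, A.ν i = some u → b i = some (f u)

noncomputable def looseHomCount (A : LGraph k) (G : SimpleGraph W) (b : Fin k → Option W) : ℕ :=
  Nat.card {f // A.IsLooseHom G b f}

def PreservesLabelledEdges (A : LGraph k) (G : SimpleGraph W) (b : Fin k → Option W) : Prop :=
  ∀ ⦃i j u v⦄, A.ν i = some u → A.ν j = some v → A.G.Adj u v →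
    ∃ x y, b i = some x ∧ b j = some y ∧ G.Adj x y

def LabelsConsistent (A : LGraph k) (b : Fin k → Option W) : Prop :=
  ∀ ⦃i j u⦄, A.ν i = some u → A.ν j = some u → ∃ y, b i = some y ∧ b j = some y

theorem lhomCount_eq_mul_looseHomCount (A G : LGraph k)
    [Decidable (A.PreservesLabelledEdges G.G G.ν)] :
    lhomCount A G =
      (if A.PreservesLabelledEdges G.G G.ν then 1 else 0) * A.looseHomCount G.G G.ν := by
  rw [lhomCount, ← Nat.card_coe_set_eq]
  split_ifs with hE
  · rw [one_mul]
    refine Nat.card_congr (Equiv.subtypeEquivRight fun f =>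
      ⟨fun ⟨hadj, hlab⟩ => ?_, fun hf => ?_⟩)
    · refine ⟨fun u v huv _ => hadj huv, fun i u hu => ?_⟩
      obtain ⟨w, hw, rfl⟩ := hlab i u hu
      exact hw
    · refine ⟨fun u v huv => ?_, fun i v hv => ⟨f v, hf.map_label hv, rfl⟩⟩
      by_cases hlab : A.Labelled u ∧ A.Labelled v
      · obtain ⟨⟨i, hi⟩, ⟨j, hj⟩⟩ := hlab
        obtain ⟨x, y, hx, hy, hxy⟩ := hE hi hj huv
        rw [hf.map_label hi, Option.some_inj] at hx
        rw [hf.map_label hj, Option.some_inj] at hy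
        rwa [hx, hy]
      · exact hf.map_adj huv hlab
  · rw [zero_mul, Nat.card_eq_zero]
    refine Or.inl ⟨fun ⟨f, hadj, hlab⟩ => hE fun i j u v hu hv huv => ?_⟩
    obtain ⟨x, hx, rfl⟩ := hlab i u hu
    obtain ⟨y, hy, rfl⟩ := hlab j v hv
    exact ⟨_, _, hx, hy, hadj huv⟩

theorem lhomCount_congr_left {A F : LGraph k} (h : LIso A F) (G : LGraph k) :
    lhomCount F G = lhomCount A G := by
  obtain ⟨e, he⟩ := h
  have hν : ∀ ⦃i v⦄, F.ν i = some v ↔ A.ν i = some (e.symm v) := fun i v => by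
    rw [← he i, Option.map_eq_some_iff]
    exact ⟨fun ⟨u, hu, huv⟩ => by rw [← huv, RelIso.symm_apply_apply]; exact hu,
      fun hu => ⟨_, hu, e.apply_symm_apply v⟩⟩
  rw [lhomCount, lhomCount, ← Nat.card_coe_set_eq, ← Nat.card_coe_set_eq]
  refine Nat.card_congr (Equiv.subtypeEquiv (e.toEquiv.symm.arrowCongr (Equiv.refl _)) fun f => ?_)
  simp only [Set.mem_ofPred_eq, Equiv.arrowCongr_apply, Equiv.symm_symm, Equiv.refl_apply,
    Function.comp_apply, RelIso.coe_fn_toEquiv]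
  constructor
  · rintro ⟨hadj, hlab⟩
    exact ⟨fun u v huv => hadj (e.map_adj_iff.2 huv), fun i u hu =>
      hlab i (e u) (hν.2 (by rwa [RelIso.symm_apply_apply]))⟩
  · rintro ⟨hadj, hlab⟩
    refine ⟨fun u v huv => ?_, fun i v hv => ?_⟩
    · simpa using hadj (e.symm.map_adj_iff.2 huv)
    · simpa using hlab i _ (hν.1 hv)

theorem looseHomCount_of_fullyLabelled {A : LGraph k} (hA : A.FullyLabelled)
    (b : Fin k → Option W) [Decidable (A.LabelsConsistent b)] :
    A.looseHomCount G b = if A.LabelsConsistent b then 1 else 0 := by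
  split_ifs with hcons
  · refine Nat.card_eq_one_iff_unique.2
      ⟨⟨fun ⟨f, hf⟩ ⟨g, hg⟩ => Subtype.ext (funext fun u => ?_)⟩, ?_⟩
    · obtain ⟨i, hi⟩ := hA u
      exact Option.some_injective _ ((hf.map_label hi).symm.trans (hg.map_label hi))
    · choose i hi using fun u => hA u
      choose f hf using fun u => hcons (hi u) (hi u)
      refine ⟨f, fun u v _ hfree => (hfree ⟨hA u, hA v⟩).elim, fun j u hu => ?_⟩
      obtain ⟨y, hj, hy⟩ := hcons hu (hi u)
      rw [hj, ← hy, (hf u).1]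
  · rw [looseHomCount, Nat.card_eq_zero]
    exact Or.inl ⟨fun ⟨f, hf⟩ =>
      hcons fun i j u hi hj => ⟨f u, hf.map_label hi, hf.map_label hj⟩⟩

section Product

variable {A B : LGraph k}

def SumLabel (A B : LGraph k) (i : Fin k) : A.V ⊕ B.V → Prop :=
  Sum.elim (fun u => A.ν i = some u) (fun w => B.ν i = some w)

theorem sumLabel_of_glue {z z' : A.V ⊕ B.V} (h : glue A B z z') :
    ∃ i, SumLabel A B i z ∧ SumLabel A B i z' := by
  obtain ⟨i, h, h'⟩ := h
  obtain ⟨u, hu, rfl⟩ := Option.map_eq_some_iff.1 h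
  obtain ⟨w, hw, rfl⟩ := Option.map_eq_some_iff.1 h'
  exact ⟨i, hu, hw⟩

theorem eq_or_labelled_of_eqvGen_glue {z z' : A.V ⊕ B.V} (h : Relation.EqvGen (glue A B) z z') :
    z = z' ∨ (∃ i, SumLabel A B i z) ∧ ∃ i, SumLabel A B i z' := by
  induction h with
  | rel z z' h =>
    obtain ⟨i, hz, hz'⟩ := sumLabel_of_glue h
    exact Or.inr ⟨⟨i, hz⟩, ⟨i, hz'⟩⟩
  | refl => exact Or.inl rfl
  | symm _ _ _ ih => exact ih.imp Eq.symm And.symm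
  | trans _ _ _ _ _ ih ih' =>
    rcases ih with rfl | ⟨h, h₁⟩
    · exact ih'
    · rcases ih' with rfl | ⟨-, h'⟩
      exacts [Or.inr ⟨h, h₁⟩, Or.inr ⟨h, h'⟩]

theorem product_ν_eq_some_iff {i : Fin k} {x : (A.product B).V} :
    (A.product B).ν i = some x ↔ ∃ z, SumLabel A B i z ∧ Quot.mk _ z = x := by
  cases hA : A.ν i with
  | some u =>
    simp only [product, hA, Option.map_some, Option.orElse_some]
    refine ⟨fun h => ⟨.inl u, hA, Option.some_injective _ h⟩, ?_⟩
    rintro ⟨u' | w, hz, rfl⟩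
    · rw [SumLabel, Sum.elim_inl, hA, Option.some_inj] at hz
      rw [hz]
    · exact congrArg some (Quot.sound ⟨i, by simp [hA], by simpa [SumLabel] using hz⟩)
  | none =>
    simp only [product, hA, Option.map_none, Option.orElse_none]
    constructor
    · intro h
      obtain ⟨w, hw, rfl⟩ := Option.map_eq_some_iff.1 h
      exact ⟨.inr w, hw, rfl⟩
    · rintro ⟨u | w, hz, rfl⟩
      · exact absurd (hA.symm.trans hz) (Option.some_ne_none u).symm
      · exact congrArg (Option.map _) (hz : B.ν i = some w)

theorem product_ν_isSome {i : Fin k} :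
    ((A.product B).ν i).isSome ↔ (A.ν i).isSome ∨ (B.ν i).isSome := by
  cases hA : A.ν i <;> cases hB : B.ν i <;> simp [product, hA, hB]

theorem labelled_product_mk {z : A.V ⊕ B.V} :
    (A.product B).Labelled (Quot.mk _ z) ↔ ∃ i, SumLabel A B i z := by
  refine ⟨fun ⟨i, hi⟩ => ?_,
    fun ⟨i, hi⟩ => ⟨i, product_ν_eq_some_iff.2 ⟨z, hi, rfl⟩⟩⟩
  obtain ⟨z', hz', heq⟩ := product_ν_eq_some_iff.1 hi
  rcases eq_or_labelled_of_eqvGen_glue (Quot.eq.1 heq) with rfl | ⟨-, h⟩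
  · exact ⟨i, hz'⟩
  · exact h

variable {b : Fin k → Option W}

theorem IsLooseHom.map_adj_mk {f : (A.product B).V → W} (hf : (A.product B).IsLooseHom G b f)
    {z z' : A.V ⊕ B.V} (h : sumAdj A B z z')
    (hfree : ¬ ((∃ i, SumLabel A B i z) ∧ ∃ i, SumLabel A B i z')) :
    G.Adj (f (Quot.mk _ z)) (f (Quot.mk _ z')) := by
  refine hf.map_adj ⟨fun heq => ?_, z, z', rfl, rfl, h⟩
    (by rwa [labelled_product_mk, labelled_product_mk])
  rcases eq_or_labelled_of_eqvGen_glue (Quot.eq.1 heq) with rfl | hlab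
  · rcases z with u | w
    exacts [A.G.irrefl h, B.G.irrefl h]
  · exact hfree hlab

theorem IsLooseHom.comp_inl {f : (A.product B).V → W} (hf : (A.product B).IsLooseHom G b f) :
    A.IsLooseHom G b fun u => f (Quot.mk _ (.inl u)) :=
  ⟨fun _ _ huv hfree => hf.map_adj_mk huv hfree,
    fun _ u hu => hf.map_label (product_ν_eq_some_iff.2 ⟨.inl u, hu, rfl⟩)⟩

theorem IsLooseHom.comp_inr {f : (A.product B).V → W} (hf : (A.product B).IsLooseHom G b f) :
    B.IsLooseHom G b fun w => f (Quot.mk _ (.inr w)) :=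
  ⟨fun _ _ huv hfree => hf.map_adj_mk huv hfree,
    fun _ w hw => hf.map_label (product_ν_eq_some_iff.2 ⟨.inr w, hw, rfl⟩)⟩

theorem IsLooseHom.map_sumLabel {fA : A.V → W} {fB : B.V → W} (hA : A.IsLooseHom G b fA)
    (hB : B.IsLooseHom G b fB) {i : Fin k} :
    ∀ {z}, SumLabel A B i z → b i = some (Sum.elim fA fB z)
  | .inl _, h => hA.map_label h
  | .inr _, h => hB.map_label h

theorem IsLooseHom.sum_elim_eq_of_glue {fA : A.V → W} {fB : B.V → W} (hA : A.IsLooseHom G b fA)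
    (hB : B.IsLooseHom G b fB) {z z' : A.V ⊕ B.V} (h : glue A B z z') :
    Sum.elim fA fB z = Sum.elim fA fB z' := by
  obtain ⟨i, hz, hz'⟩ := sumLabel_of_glue h
  exact Option.some_injective _ ((hA.map_sumLabel hB hz).symm.trans (hA.map_sumLabel hB hz'))

theorem IsLooseHom.quotLift {fA : A.V → W} {fB : B.V → W} (hA : A.IsLooseHom G b fA)
    (hB : B.IsLooseHom G b fB) :
    (A.product B).IsLooseHom G b
      (Quot.lift (Sum.elim fA fB) fun _ _ => hA.sum_elim_eq_of_glue hB) := by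
  refine ⟨?_, fun i x hx => ?_⟩
  · rintro _ _ ⟨-, z | z, z' | z', rfl, rfl, h⟩ hfree <;>
      rw [labelled_product_mk, labelled_product_mk] at hfree
    exacts [hA.map_adj h hfree, h.elim, h.elim, hB.map_adj h hfree]
  · obtain ⟨z, hz, rfl⟩ := product_ν_eq_some_iff.1 hx
    exact hA.map_sumLabel hB hz

theorem looseHomCount_product (G : SimpleGraph W) (b : Fin k → Option W) :
    (A.product B).looseHomCount G b = A.looseHomCount G b * B.looseHomCount G b := by
  rw [looseHomCount, looseHomCount, looseHomCount, ← Nat.card_prod]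
  exact Nat.card_congr
    { toFun := fun f => (⟨_, f.2.comp_inl⟩, ⟨_, f.2.comp_inr⟩)
      invFun := fun g => ⟨_, g.1.2.quotLift g.2.2⟩
      left_inv := fun f => Subtype.ext (funext (Quot.ind (by rintro (u | w) <;> rfl)))
      right_inv := fun _ => rfl }

end Product

variable {A : LGraph k} {l : Fin k}

def NbrCompatible (A : LGraph k) (G : SimpleGraph W) (b : Fin k → Option W) (x : A.V) (w : W) :
    Prop :=
  ∀ ⦃j z⦄, A.ν j = some z → A.G.Adj x z → ∃ y, b j = some y ∧ G.Adj w y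

theorem removeLabel_ν_eq_some {i : Fin k} {u : A.V} :
    (A.removeLabel l).ν i = some u ↔ i ≠ l ∧ A.ν i = some u := by
  by_cases hi : i = l <;> simp [removeLabel, hi]

theorem looseHomCount_removeLabel_of_eq {l' : Fin k} (hl' : l' ≠ l) (hν : A.ν l' = A.ν l)
    (G : SimpleGraph W) (b : Fin k → Option W) :
    (A.removeLabel l).looseHomCount G b =
      A.looseHomCount G (fun i => b (if i = l then l' else i)) := by
  have hlab : ∀ u, (A.removeLabel l).Labelled u ↔ A.Labelled u := fun u => by
    refine ⟨fun ⟨i, hi⟩ => ⟨i, (removeLabel_ν_eq_some.1 hi).2⟩, fun ⟨i, hi⟩ => ?_⟩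
    by_cases hil : i = l
    · exact ⟨l', removeLabel_ν_eq_some.2 ⟨hl', hν.trans (hil ▸ hi)⟩⟩
    · exact ⟨i, removeLabel_ν_eq_some.2 ⟨hil, hi⟩⟩
  refine Nat.card_congr (Equiv.subtypeEquivRight fun f => ⟨fun hf => ⟨?_, fun i u hu => ?_⟩,
    fun hf => ⟨?_, fun i u hu => ?_⟩⟩)
  · exact fun u v huv hfree => hf.map_adj huv fun h => hfree ⟨(hlab u).1 h.1, (hlab v).1 h.2⟩
  · by_cases hil : i = l
    · subst hil
      simpa using hf.map_label (removeLabel_ν_eq_some.2 ⟨hl', hν.trans hu⟩)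
    · simpa [hil] using hf.map_label (removeLabel_ν_eq_some.2 ⟨hil, hu⟩)
  · exact fun u v huv hfree => hf.map_adj huv fun h => hfree ⟨(hlab u).2 h.1, (hlab v).2 h.2⟩
  · obtain ⟨hil, hu⟩ := removeLabel_ν_eq_some.1 hu
    simpa [hil] using hf.map_label hu

theorem labelled_removeLabel_iff {x : A.V} (hx : A.ν l = some x)
    (honly : ∀ i, A.ν i = some x → i = l) {u : A.V} :
    (A.removeLabel l).Labelled u ↔ A.Labelled u ∧ u ≠ x := by
  refine ⟨fun ⟨i, hi⟩ => ?_,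
    fun ⟨⟨i, hi⟩, hux⟩ => ⟨i, removeLabel_ν_eq_some.2 ⟨?_, hi⟩⟩⟩
  · obtain ⟨hil, hi⟩ := removeLabel_ν_eq_some.1 hi
    exact ⟨⟨i, hi⟩, fun hux => hil (honly i (hux ▸ hi))⟩
  · rintro rfl
    exact hux (Option.some_injective _ (hi.symm.trans hx))

theorem isLooseHom_removeLabel_iff {x : A.V} (hx : A.ν l = some x)
    (honly : ∀ i, A.ν i = some x → i = l) {b : Fin k → Option W} {f : A.V → W} :
    (A.removeLabel l).IsLooseHom G b f ↔
      A.NbrCompatible G b x (f x) ∧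
        A.IsLooseHom G (fun i => if i = l then some (f x) else b i) f := by
  have hlab : ∀ u, (A.removeLabel l).Labelled u ↔ A.Labelled u ∧ u ≠ x := fun _ =>
    labelled_removeLabel_iff hx honly
  have hν : ∀ ⦃j z⦄, A.ν j = some z → z ≠ x → j ≠ l := fun j z hz hzx hjl =>
    hzx (Option.some_injective _ (hz.symm.trans (hjl ▸ hx)))
  constructor
  · intro hf
    refine ⟨fun j z hz hxz => ⟨f z, ?_, ?_⟩,
      ⟨fun u v huv hfree => ?_, fun i u hu => ?_⟩⟩
    · exact hf.map_label (removeLabel_ν_eq_some.2 ⟨hν hz hxz.ne', hz⟩)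
    · exact hf.map_adj hxz fun h => ((hlab x).1 h.1).2 rfl
    · exact hf.map_adj huv fun h => hfree ⟨((hlab u).1 h.1).1, ((hlab v).1 h.2).1⟩
    · by_cases hil : i = l
      · subst hil
        rw [Option.some_injective _ (hu.symm.trans hx)]
        simp
      · simpa [hil] using hf.map_label (removeLabel_ν_eq_some.2 ⟨hil, hu⟩)
  · rintro ⟨hC, hf⟩
    have hlabel : ∀ ⦃i u⦄, A.ν i = some u → u ≠ x → b i = some (f u) :=
      fun i u hu hux => by simpa [hν hu hux] using hf.map_label hu
    refine ⟨fun u v huv hfree => ?_, fun i u hu => ?_⟩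
    · by_cases hboth : A.Labelled u ∧ A.Labelled v
      · obtain ⟨⟨i, hi⟩, ⟨j, hj⟩⟩ := hboth
        rw [hlab, hlab] at hfree
        have hux : u = x ∨ v = x := by
          by_contra! h
          exact hfree ⟨⟨⟨i, hi⟩, h.1⟩, ⟨⟨j, hj⟩, h.2⟩⟩
        rcases hux with rfl | rfl
        · obtain ⟨y, hy, hxy⟩ := hC hj huv
          rw [hlabel hj huv.ne', Option.some_inj] at hy
          rwa [← hy] at hxy
        · obtain ⟨y, hy, hxy⟩ := hC hi huv.symm
          rw [hlabel hi huv.ne, Option.some_inj] at hy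
          rw [← hy] at hxy
          exact hxy.symm
      · exact hf.map_adj huv hboth
    · obtain ⟨hil, hu⟩ := removeLabel_ν_eq_some.1 hu
      simpa [hil] using hf.map_label hu

theorem looseHomCount_removeLabel_eq_sum [Fintype W] {x : A.V} (hx : A.ν l = some x)
    (honly : ∀ i, A.ν i = some x → i = l) (G : SimpleGraph W) (b : Fin k → Option W)
    [DecidablePred (A.NbrCompatible G b x)] :
    (A.removeLabel l).looseHomCount G b =
      ∑ w, if A.NbrCompatible G b x w then
        A.looseHomCount G (fun i => if i = l then some w else b i) else 0 := by
  have : Finite (A.removeLabel l).V := A.fin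
  rw [looseHomCount, Nat.card_subtype_eq_sum_fiber (g := fun f : (A.removeLabel l).V → W => f x)]
  refine Finset.sum_congr rfl fun w _ => ?_
  split_ifs with hC
  · refine Nat.card_congr (Equiv.subtypeEquivRight fun f => ?_)
    have hf := isLooseHom_removeLabel_iff (G := G) (b := b) (f := f) hx honly
    refine ⟨fun ⟨h, hfx⟩ => hfx ▸ (hf.1 h).2, fun h => ?_⟩
    obtain rfl : w = f x := by simpa using h.map_label hx
    exact ⟨hf.2 ⟨hC, h⟩, rfl⟩
  · rw [Nat.card_eq_zero]
    refine Or.inl ⟨fun ⟨f, h, hfx⟩ => hC ?_⟩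
    exact hfx ▸ ((isLooseHom_removeLabel_iff hx honly).1 h).1

section Formulas

open CForm

variable [NeZero k]

open Classical in
noncomputable def eqFormula (A : LGraph k) (ρ : Fin k → Fin k) : CForm (Fin k) :=
  conj (univ.filter fun p : Fin k × Fin k => ∃ u, A.ν p.1 = some u ∧ A.ν p.2 = some u)
    fun p => eq (ρ p.1) (ρ p.2)

open Classical in
noncomputable def edgeFormula (A : LGraph k) : CForm (Fin k) :=
  conj (univ.filter fun p : Fin k × Fin k =>
    ∃ u v, A.ν p.1 = some u ∧ A.ν p.2 = some v ∧ A.G.Adj u v) fun p => adj p.1 p.2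

open Classical in
noncomputable def nbrFormula (A : LGraph k) (x : A.V) (ρ : Fin k → Fin k) (p : Fin k) :
    CForm (Fin k) :=
  conj (univ.filter fun j => ∃ z, A.ν j = some z ∧ A.G.Adj x z) fun j => adj p (ρ j)

theorem sat_eqFormula {ρ : Fin k → Fin k} {a : Fin k → Option W} :
    Sat G (A.eqFormula ρ) a ↔ A.LabelsConsistent (a ∘ ρ) := by
  simp only [eqFormula, sat_conj, mem_filter, mem_univ, true_and, Sat, LabelsConsistent,
    Function.comp_apply]
  exact ⟨fun h i j u hi hj => h (i, j) ⟨u, hi, hj⟩, fun h p ⟨u, hu⟩ => h hu.1 hu.2⟩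

theorem sat_edgeFormula {a : Fin k → Option W} :
    Sat G A.edgeFormula a ↔ A.PreservesLabelledEdges G a := by
  simp only [edgeFormula, sat_conj, mem_filter, mem_univ, true_and, Sat, PreservesLabelledEdges]
  exact ⟨fun h i j u v hu hv huv => h (i, j) ⟨u, v, hu, hv, huv⟩,
    fun h p ⟨u, v, hu, hv, huv⟩ => h hu hv huv⟩

theorem sat_nbrFormula {p : Fin k} {ρ : Fin k → Fin k} {x : A.V} (hx : A.ν l = some x)
    (hp : ∀ i, i ≠ l → ρ i ≠ p) {a : Fin k → Option W} {w : W} :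
    Sat G (A.nbrFormula x ρ p) (fun j => if j = p then some w else a j) ↔
      A.NbrCompatible G (a ∘ ρ) x w := by
  have hρ : ∀ ⦃j z⦄, A.ν j = some z → A.G.Adj x z → ρ j ≠ p := fun j z hz hxz =>
    hp j fun hjl => hxz.ne (Option.some_injective _ (hx.symm.trans (hjl ▸ hz)))
  simp only [nbrFormula, sat_conj, mem_filter, mem_univ, true_and, Sat, NbrCompatible,
    Function.comp_apply]
  refine ⟨fun h j z hz hxz => ?_, fun h j ⟨z, hz, hxz⟩ => ?_⟩
  · obtain ⟨v, w', hv, hw', hadj⟩ := h j ⟨z, hz, hxz⟩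
    simp only [if_pos, if_neg (hρ hz hxz), Option.some_inj] at hv hw'
    exact ⟨w', hw', hv ▸ hadj⟩
  · obtain ⟨y', hy', hadj⟩ := h hz hxz
    exact ⟨w, y', by simp, by simp [hρ hz hxz, hy'], hadj⟩

end Formulas

end LGraph

open CForm LGraph

section Definability

variable {k : ℕ}

/-- The relabellings `ρ` let an eliminated label be re-bound to a fresh variable. -/
def GCDefinable (q : ℕ) (A : LGraph k) : Prop :=
  ∀ ρ : Fin k → Fin k, ∃ φ : ℕ → CForm (Fin k), (∀ j, (φ j).IsGC q) ∧
    ∀ (W : Type) [Finite W] (G : SimpleGraph W) (a : Fin k → Option W),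
      (∀ i, (A.ν i).isSome → (a (ρ i)).isSome) →
        DefinesNat G a φ (A.looseHomCount G (a ∘ ρ))

theorem GCDefinable.removeLabel_of_eq {q : ℕ} {A : LGraph k} (hA : GCDefinable q A)
    {l l' : Fin k} (hl' : l' ≠ l) (hν : A.ν l' = A.ν l) : GCDefinable q (A.removeLabel l) := by
  intro ρ
  obtain ⟨φ, hφ, hdef⟩ := hA fun i => ρ (if i = l then l' else i)
  refine ⟨φ, hφ, fun W _ G a ha => ?_⟩
  rw [looseHomCount_removeLabel_of_eq hl' hν]
  refine hdef W G a fun i hi => ?_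
  by_cases hil : i = l
  · subst hil
    simpa using ha l' (by simpa [LGraph.removeLabel, hl', hν] using hi)
  · simpa [hil] using ha i (by simpa [LGraph.removeLabel, hil] using hi)

variable [NeZero k]

theorem gcDefinable_of_fullyLabelled {A : LGraph k} (hA : A.FullyLabelled) :
    GCDefinable 0 A := by
  classical
  refine fun ρ => ⟨indicator (A.eqFormula ρ),
    IsGC.indicator (IsGC.conj fun _ _ => isGC_eq 0 _ _), fun W _ G a _ => ?_⟩
  rw [looseHomCount_of_fullyLabelled hA]
  exact definesNat_indicator sat_eqFormula

theorem GCDefinable.product {q r : ℕ} {A B : LGraph k} (hA : GCDefinable q A)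
    (hB : GCDefinable r B) : GCDefinable (max q r) (A.product B) := by
  intro ρ
  obtain ⟨φ, hφ, hdefA⟩ := hA ρ
  obtain ⟨χ, hχ, hdefB⟩ := hB ρ
  refine ⟨mul φ χ, IsGC.mul (fun j => (hφ j).mono (le_max_left q r))
    (fun j => (hχ j).mono (le_max_right q r)), fun W _ G a ha => ?_⟩
  rw [looseHomCount_product]
  exact (hdefA W G a fun i hi => ha i (product_ν_isSome.2 (.inl hi))).mul
    (hdefB W G a fun i hi => ha i (product_ν_isSome.2 (.inr hi)))

/-- The eliminated label is re-quantified as a fresh variable `p`, guarded by the label `g` of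
the neighbour `y`. -/
theorem GCDefinable.removeLabel_of_unique {q : ℕ} {A : LGraph k} (hA : GCDefinable q A)
    {l g : Fin k} {x y : A.V} (hx : A.ν l = some x) (honly : ∀ i, A.ν i = some x → i = l)
    (hy : A.ν g = some y) (hxy : A.G.Adj x y) : GCDefinable (q + 1) (A.removeLabel l) := by
  classical
  intro ρ
  obtain ⟨p, hp⟩ := exists_forall_ne_imp_apply_ne ρ l
  have hgl : g ≠ l := fun h => hxy.ne (Option.some_injective _ (hx.symm.trans (h ▸ hy)))
  obtain ⟨φ, hφ, hdef⟩ := hA fun i => if i = l then p else ρ i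
  refine ⟨nbrSum (ρ g) p (mul (indicator (A.nbrFormula x ρ p)) φ),
    IsGC.nbrSum (IsGC.mul (IsGC.conj fun _ _ => isGC_adj q _ _).indicator hφ) (hp g hgl),
    fun W _ G a ha => ?_⟩
  cases nonempty_fintype W
  obtain ⟨w₀, hw₀⟩ := Option.isSome_iff_exists.1
    (ha g (by simp [LGraph.removeLabel, hgl, hy]))
  rw [looseHomCount_removeLabel_eq_sum hx honly]
  refine DefinesNat.nbrSum hw₀ (hp g hgl) (fun w => ?_) (fun w hw => ?_)
  · have hrelabel : (fun j => if j = p then some w else a j) ∘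
        (fun i => if i = l then p else ρ i) = fun i => if i = l then some w else (a ∘ ρ) i := by
      funext i
      by_cases hil : i = l <;> simp [hil, hp i]
    have hφw := hdef W G (fun j => if j = p then some w else a j) fun i hi => by
      by_cases hil : i = l
      · simp [hil]
      · simpa [hil, hp i hil] using ha i (by simpa [LGraph.removeLabel, hil] using hi)
    rw [hrelabel] at hφw
    convert (definesNat_indicator (sat_nbrFormula hx hp)).mul hφw using 1
    split_ifs <;> simp
  · have hC : A.NbrCompatible G (a ∘ ρ) x w := by
      by_contra hC
      exact hw (if_neg hC)
    obtain ⟨y', hy', hwy⟩ := hC hy hxy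
    rw [Function.comp_apply, hw₀, Option.some_inj] at hy'
    exact (hy' ▸ hwy).symm

theorem GCDefinable.removeLabel {q : ℕ} {A : LGraph k} (hA : GCDefinable q A) {l g : Fin k}
    {x y : A.V} (hx : A.ν l = some x) (hy : A.ν g = some y) (hxy : A.G.Adj x y) :
    GCDefinable (q + 1) (A.removeLabel l) := by
  by_cases hdup : ∃ l', l' ≠ l ∧ A.ν l' = A.ν l
  · obtain ⟨l', hl', hν⟩ := hdup
    intro ρ
    obtain ⟨φ, hφ, hdef⟩ := hA.removeLabel_of_eq hl' hν ρ
    exact ⟨φ, fun j => (hφ j).mono q.le_succ, hdef⟩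
  · refine hA.removeLabel_of_unique hx (fun i hi => ?_) hy hxy
    by_contra h
    exact hdup ⟨i, h, hi.trans hx.symm⟩

theorem gcDefinable_graphOf : ∀ t : CT k, t.GuardedValid → GCDefinable t.elimDepth t.graphOf
  | .leaf _, hA => gcDefinable_of_fullyLabelled hA
  | .elim _ t, ⟨ht, _, hx, _, _, hy, hxy⟩ => (gcDefinable_graphOf t ht).removeLabel hx hy hxy
  | .prod t₁ t₂, ⟨h₁, h₂⟩ =>
    (gcDefinable_graphOf t₁ h₁).product (gcDefinable_graphOf t₂ h₂)

end Definability

theorem gc_homcap_general (k q : ℕ) (hk : 1 ≤ k) (F : LGraph k)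
    (hF : F ∈ GLclass k q) (m : ℕ) :
    ∃ φ : CForm (Fin k), CForm.Guarded φ ∧ CForm.qr φ ≤ q ∧
      ∀ G : LGraph k, (∀ i, (F.ν i).isSome → (G.ν i).isSome) →
        (LGraph.lhomCount F G = m ↔ CForm.Sat G.G φ G.ν) := by
  classical
  have : NeZero k := ⟨by omega⟩
  obtain ⟨t, ht, hdepth, hiso⟩ := hF
  obtain ⟨φ, hφ, hdef⟩ := gcDefinable_graphOf t ht id
  set A := t.graphOf
  have hE : A.edgeFormula.IsGC q := IsGC.conj fun _ _ => isGC_adj q _ _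
  have hGC := IsGC.mul hE.indicator (fun j => (hφ j).mono hdepth) m
  refine ⟨mul (indicator A.edgeFormula) φ m, hGC.guarded, hGC.qr_le, fun G hG => ?_⟩
  have hlabels : ∀ i, (A.ν i).isSome → (G.ν i).isSome := by
    obtain ⟨e, he⟩ := hiso
    exact fun i hi => hG i (by rw [← he i, Option.isSome_map]; exact hi)
  have := G.fin
  rw [lhomCount_congr_left hiso, lhomCount_eq_mul_looseHomCount]
  exact (((definesNat_indicator sat_edgeFormula).mul (hdef G.V G.G G.ν hlabels)) m).symm

/-- For `F ∈ GL^k_q` and `m ≥ 0` there is a `GC^k_q`-formula `φ_m` such that for every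
appropriately labelled `G`: `hom(F,G) = m` iff `G ⊨ φ_m`. -/
theorem gc_homcap (k q : ℕ) (hk : 1 ≤ k) (hq : 1 ≤ q) (F : LGraph k)
    (hF : F ∈ GLclass k q) (m : ℕ) :
    ∃ φ : CForm (Fin k), CForm.Guarded φ ∧ CForm.qr φ ≤ q ∧
      ∀ G : LGraph k, (∀ i, (F.ν i).isSome → (G.ν i).isSome) →
        (LGraph.lhomCount F G = m ↔ CForm.Sat G.G φ G.ν) :=
  gc_homcap_general k q hk F hF m
end

section
/- Let k ≥ 1 and q ≥ 0. Let G and H be finite simple graphs and let γ : {1,…,k} ⇀ V(G) × V(H) be a partial function. Then the following are equivalent: (1) Duplicator has a winning strategy in the q-round bijective k-pebble game on G and H starting in position γ; (2) for all formulae φ ∈ C^k_q whose free variables are among {x_p : p ∈ dom(γ)}, G with the interpretation x_p ↦ γ_G(p) satisfies φ if and only if H with the interpretation x_p ↦ γ_H(p) satisfies φ. -/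
set_option maxHeartbeats 1000000

/-!
Hella's theorem, by induction on `q`.

If Duplicator wins, the truth of a formula transfers along the position by induction on the
formula: the bijection Duplicator plays against pebble `i` maps the witnesses of `∃^{≥t} xᵢ φ` in
`G` injectively to witnesses in `H`, and back through its inverse.

Conversely, suppose `G, γ_G` and `H, γ_H` agree on `C^k_{q+1}` and Spoiler picks pebble `p`.
Only finitely many rank-`q` types over `dom γ ∪ {p}` are realised by vertices of `G` and `H`,
so each of them is defined by a single formula `χ` of rank `q`: a conjunction of formulae
separating it from the other realised types. The formulae `∃^{≥t} x_p χ` have rank `q + 1`,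
hence every type is realised equally often in `G` and in `H`, and a bijection preserving types
is a Duplicator move after which the positions still agree on `C^k_q`.
-/

namespace CForm

theorem exists_formula_defining_type {α : Type} {ι : Type*} [Finite ι] {S : Set (CForm α)}
    (hS : S.Nonempty) (hnot : ∀ φ ∈ S, not φ ∈ S) (hand : ∀ φ ∈ S, ∀ ψ ∈ S, and φ ψ ∈ S)
    (sat : ι → CForm α → Prop) (sat_not : ∀ y φ, sat y (not φ) ↔ ¬ sat y φ)
    (sat_and : ∀ y φ ψ, sat y (and φ ψ) ↔ sat y φ ∧ sat y ψ) (x : ι) :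
    ∃ χ ∈ S, ∀ y, sat y χ ↔ ∀ φ ∈ S, sat y φ ↔ sat x φ := by
  classical
  have := Fintype.ofFinite ι
  have separate : ∀ y, ¬ (∀ φ ∈ S, sat y φ ↔ sat x φ) → ∃ δ ∈ S, sat x δ ∧ ¬ sat y δ := by
    intro y hy
    push Not at hy
    obtain ⟨φ, hφS, hφ⟩ := hy
    by_cases hx : sat x φ
    · exact ⟨φ, hφS, hx, by tauto⟩
    · exact ⟨not φ, hnot φ hφS, (sat_not x φ).2 hx, by rw [sat_not]; tauto⟩
  suffices ∀ s : Finset ι, ∃ χ ∈ S, sat x χ ∧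
      ∀ y ∈ s, sat y χ → ∀ φ ∈ S, sat y φ ↔ sat x φ by
    obtain ⟨χ, hχS, hχx, hχ⟩ := this Finset.univ
    exact ⟨χ, hχS, fun y => ⟨hχ y (Finset.mem_univ y), fun hy => (hy χ hχS).2 hχx⟩⟩
  intro s
  induction s using Finset.induction_on with
  | empty =>
    obtain ⟨φ, hφS⟩ := hS
    by_cases hx : sat x φ
    · exact ⟨φ, hφS, hx, by simp⟩
    · exact ⟨not φ, hnot φ hφS, (sat_not x φ).2 hx, by simp⟩
  | insert y s _ ih =>
    obtain ⟨χ, hχS, hχx, hχ⟩ := ih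
    by_cases hy : ∀ φ ∈ S, sat y φ ↔ sat x φ
    · refine ⟨χ, hχS, hχx, ?_⟩
      simp only [Finset.mem_insert, forall_eq_or_imp]
      exact ⟨fun _ => hy, hχ⟩
    · obtain ⟨δ, hδS, hδx, hδy⟩ := separate y hy
      refine ⟨and χ δ, hand χ hχS δ hδS, (sat_and x χ δ).2 ⟨hχx, hδx⟩, ?_⟩
      simp only [Finset.mem_insert, forall_eq_or_imp, sat_and]
      exact ⟨fun h => absurd h.2 hδy, fun z hz h => hχ z hz h.1⟩

variable {α : Type} [DecidableEq α] {V W : Type*} {G : SimpleGraph V} {H : SimpleGraph W}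

theorem sat_count_iff {t : ℕ} {i : α} {φ : CForm α} {a : α → Option V} :
    Sat G (count t i φ) a ↔
      ∃ s : Finset V, t ≤ s.card ∧ ∀ v ∈ s, Sat G φ (Function.update a i (some v)) := by
  have hupd : ∀ v, Function.update a i (some v) = fun j => if j = i then some v else a j :=
    fun v => funext fun j => Function.update_apply a i (some v) j
  simp only [Sat, hupd]

theorem sat_count_iff_le_ncard [Finite V] {t : ℕ} {i : α} {φ : CForm α} {a : α → Option V} :
    Sat G (count t i φ) a ↔ t ≤ {v | Sat G φ (Function.update a i (some v))}.ncard := by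
  rw [sat_count_iff]
  constructor
  · rintro ⟨s, hts, hs⟩
    exact hts.trans ((Set.ncard_coe_finset s).symm.trans_le (Set.ncard_le_ncard hs))
  · intro ht
    have hfin := Set.toFinite {v | Sat G φ (Function.update a i (some v))}
    exact ⟨hfin.toFinset, by rwa [← Set.ncard_eq_toFinset_card _ hfin],
      fun v hv => hfin.mem_toFinset.1 hv⟩

theorem Sat.count_of_equiv {t : ℕ} {i : α} {φ : CForm α} {a : α → Option V}
    {b : α → Option W} (f : V ≃ W)
    (h : ∀ v, Sat G φ (Function.update a i (some v)) →
      Sat H φ (Function.update b i (some (f v))))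
    (hs : Sat G (count t i φ) a) : Sat H (count t i φ) b := by
  rw [sat_count_iff] at hs ⊢
  obtain ⟨s, hts, hs⟩ := hs
  exact ⟨s.map f.toEmbedding, by simpa using hts,
    Finset.forall_mem_map.2 fun v hv => h v (hs v hv)⟩

theorem sat_count_congr {t : ℕ} {i : α} {φ : CForm α} {a : α → Option V}
    {b : α → Option W} (f : V ≃ W)
    (h : ∀ v, Sat G φ (Function.update a i (some v)) ↔
      Sat H φ (Function.update b i (some (f v)))) :
    Sat G (count t i φ) a ↔ Sat H (count t i φ) b :=
  ⟨Sat.count_of_equiv f fun v => (h v).1,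
    Sat.count_of_equiv f.symm fun w hw => (h (f.symm w)).2 (by rwa [f.apply_symm_apply])⟩

def fragment (q : ℕ) (D : Set α) : Set (CForm α) :=
  {φ | qr φ ≤ q ∧ ∀ i ∈ freeVars φ, i ∈ D}

@[simp]
theorem mem_fragment_not {q : ℕ} {D : Set α} {φ : CForm α} :
    not φ ∈ fragment q D ↔ φ ∈ fragment q D :=
  Iff.rfl

@[simp]
theorem mem_fragment_and {q : ℕ} {D : Set α} {φ ψ : CForm α} :
    and φ ψ ∈ fragment q D ↔ φ ∈ fragment q D ∧ ψ ∈ fragment q D := by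
  simp only [fragment, Set.mem_ofPred_eq, qr, freeVars, max_le_iff, Finset.mem_union, or_imp,
    forall_and]
  tauto

@[simp]
theorem mem_fragment_or {q : ℕ} {D : Set α} {φ ψ : CForm α} :
    or φ ψ ∈ fragment q D ↔ φ ∈ fragment q D ∧ ψ ∈ fragment q D :=
  mem_fragment_and

@[simp]
theorem mem_fragment_count {q t : ℕ} {D : Set α} {p : α} {φ : CForm α} :
    count t p φ ∈ fragment (q + 1) D ↔ φ ∈ fragment q (insert p D) := by
  simp only [fragment, Set.mem_ofPred_eq, qr, freeVars, Finset.mem_erase, Set.mem_insert_iff,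
    Nat.add_le_add_iff_right, and_imp]
  refine and_congr_right fun _ => forall_congr' fun i => ?_
  by_cases hi : i = p <;> simp [hi]

def Agree (G : SimpleGraph V) (H : SimpleGraph W) (S : Set (CForm α)) (a : α → Option V)
    (b : α → Option W) : Prop :=
  ∀ φ ∈ S, Sat G φ a ↔ Sat H φ b

theorem Agree.mono {S T : Set (CForm α)} {a : α → Option V} {b : α → Option W}
    (h : Agree G H T a b) (hST : S ⊆ T) : Agree G H S a b :=
  fun φ hφ => h φ (hST hφ)

theorem Agree.ncard_eq [Finite V] [Finite W] {q : ℕ} {D : Set α} {a : α → Option V}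
    {b : α → Option W} (h : Agree G H (fragment (q + 1) D) a b) {p : α} {χ : CForm α}
    (hχ : χ ∈ fragment q (insert p D)) :
    {v | Sat G χ (Function.update a p (some v))}.ncard =
      {w | Sat H χ (Function.update b p (some w))}.ncard :=
  eq_of_forall_le_iff fun t => by
    rw [← sat_count_iff_le_ncard, ← sat_count_iff_le_ncard]
    exact h (count t p χ) (mem_fragment_count.2 hχ)

theorem Agree.exists_equiv_update [Finite V] [Finite W] {q : ℕ} {D : Set α} {a : α → Option V}
    {b : α → Option W} (h : Agree G H (fragment (q + 1) D) a b) (p : α) :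
    ∃ f : V ≃ W, ∀ v, Agree G H (fragment q (insert p D))
      (Function.update a p (some v)) (Function.update b p (some (f v))) := by
  classical
  set S := fragment q (insert p D)
  let sat : V ⊕ W → CForm α → Prop := fun x φ =>
    Sum.elim (fun v => Sat G φ (Function.update a p (some v)))
      (fun w => Sat H φ (Function.update b p (some w))) x
  let type : V ⊕ W → Set (CForm α) := fun x => {φ ∈ S | sat x φ}
  suffices hcard : ∀ τ, Nat.card {v // type (.inl v) = τ} = Nat.card {w // type (.inr w) = τ} by
    obtain ⟨f, hf⟩ : ∃ f : V ≃ W, ∀ v, type (.inr (f v)) = type (.inl v) :=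
      ⟨_, Equiv.ofFiberEquiv_map (f := fun v => type (.inl v)) (g := fun w => type (.inr w))
        fun τ => (Finite.card_eq.1 (hcard τ)).some⟩
    exact ⟨f, fun v => Set.sep_ext_iff.1 (hf v).symm⟩
  intro τ
  by_cases hτ : ∃ x, type x = τ
  · obtain ⟨x, rfl⟩ := hτ
    obtain ⟨χ, hχS, hχ⟩ := exists_formula_defining_type (S := S)
      ⟨eq p p, by simp [S, fragment, qr, freeVars]⟩ (fun φ hφ => mem_fragment_not.2 hφ)
      (fun φ hφ ψ hψ => mem_fragment_and.2 ⟨hφ, hψ⟩) sat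
      (by rintro (v | w) φ <;> rfl) (by rintro (v | w) φ ψ <;> rfl) x
    have hχtype : ∀ y, sat y χ ↔ type y = type x := fun y => (hχ y).trans Set.sep_ext_iff.symm
    simp only [← hχtype]
    exact h.ncard_eq hχS
  · push Not at hτ
    have : IsEmpty {v // type (.inl v) = τ} := ⟨fun v => hτ _ v.2⟩
    have : IsEmpty {w // type (.inr w) = τ} := ⟨fun w => hτ _ w.2⟩
    simp only [Nat.card_of_isEmpty]

end CForm

section

open CForm

variable {V W : Type*} {G : SimpleGraph V} {H : SimpleGraph W} {k : ℕ}

theorem partialIso_iff_agree_atoms {γ : Fin k → Option (V × W)} :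
    PartialIso G H γ ↔ ∀ i j, (γ i).isSome → (γ j).isSome →
      Agree G H {eq i j, adj i j} (Option.map Prod.fst ∘ γ) (Option.map Prod.snd ∘ γ) := by
  constructor
  · intro hγ i j hi hj
    obtain ⟨⟨vi, wi⟩, hi⟩ := Option.isSome_iff_exists.1 hi
    obtain ⟨⟨vj, wj⟩, hj⟩ := Option.isSome_iff_exists.1 hj
    simpa [Agree, Sat, hi, hj, eq_comm] using hγ i j vi wi vj wj hi hj
  · intro h i j vi wi vj wj hi hj
    simpa [Agree, Sat, hi, hj, eq_comm] using h i j (by simp [hi]) (by simp [hj])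

theorem partialIso_of_agree {q : ℕ} {γ : Fin k → Option (V × W)}
    (h : Agree G H (fragment q {i | (γ i).isSome}) (Option.map Prod.fst ∘ γ)
      (Option.map Prod.snd ∘ γ)) :
    PartialIso G H γ :=
  partialIso_iff_agree_atoms.2 fun i j hi hj => h.mono fun φ hφ => by
    rcases hφ with rfl | rfl <;> simp [fragment, qr, freeVars, hi, hj]

theorem setOf_isSome_update {α β : Type*} [DecidableEq α] (γ : α → Option β) (p : α) (x : β) :
    {j | (Function.update γ p (some x) j).isSome} = insert p {j | (γ j).isSome} := by
  ext j
  by_cases hj : j = p <;> simp [hj]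

theorem DupWins.partialIso {q : ℕ} {γ : Fin k → Option (V × W)} (h : DupWins G H k q γ) :
    PartialIso G H γ := by
  cases q with
  | zero => exact h
  | succ q => exact h.1

theorem dupWins_succ_iff {q : ℕ} {γ : Fin k → Option (V × W)} :
    DupWins G H k (q + 1) γ ↔ PartialIso G H γ ∧ ∀ p, ∃ f : V ≃ W, ∀ v,
      DupWins G H k q (Function.update γ p (some (v, f v))) := by
  have hupd : ∀ p x, Function.update γ p x = fun j => if j = p then x else γ j :=
    fun p x => funext fun j => Function.update_apply γ p x j
  simp only [DupWins, hupd]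

theorem DupWins.agree {q : ℕ} {γ : Fin k → Option (V × W)} (h : DupWins G H k q γ) :
    Agree G H (fragment q {i | (γ i).isSome}) (Option.map Prod.fst ∘ γ)
      (Option.map Prod.snd ∘ γ) := by
  intro φ hφ
  induction φ generalizing q γ with
  | eq i j | adj i j =>
    exact partialIso_iff_agree_atoms.1 h.partialIso i j (hφ.2 i (by simp [freeVars]))
      (hφ.2 j (by simp [freeVars])) _ (by simp)
  | not φ ih => exact not_congr (ih h hφ)
  | or φ ψ ihφ ihψ =>
    rw [mem_fragment_or] at hφ
    exact or_congr (ihφ h hφ.1) (ihψ h hφ.2)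
  | and φ ψ ihφ ihψ =>
    rw [mem_fragment_and] at hφ
    exact and_congr (ihφ h hφ.1) (ihψ h hφ.2)
  | count t i φ ih =>
    cases q with
    | zero => exact absurd hφ.1 (Nat.not_succ_le_zero _)
    | succ q =>
      obtain ⟨f, hf⟩ := (dupWins_succ_iff.1 h).2 i
      refine sat_count_congr f fun v => ?_
      have hv := ih (hf v) (by rwa [setOf_isSome_update, ← mem_fragment_count])
      rwa [Function.comp_update, Function.comp_update] at hv

theorem dupWins_of_agree [Finite V] [Finite W] {q : ℕ} {γ : Fin k → Option (V × W)}
    (h : Agree G H (fragment q {i | (γ i).isSome}) (Option.map Prod.fst ∘ γ)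
      (Option.map Prod.snd ∘ γ)) :
    DupWins G H k q γ := by
  induction q generalizing γ with
  | zero => exact partialIso_of_agree h
  | succ q ih =>
    refine dupWins_succ_iff.2 ⟨partialIso_of_agree h, fun p => ?_⟩
    obtain ⟨f, hf⟩ := h.exists_equiv_update p
    refine ⟨f, fun v => ih ?_⟩
    rw [Function.comp_update, Function.comp_update, setOf_isSome_update]
    exact hf v

end

theorem hella_bijective_game_general (k : ℕ) (q : ℕ) {n m : ℕ}
    (G : SimpleGraph (Fin n)) (H : SimpleGraph (Fin m))
    (γ : Fin k → Option (Fin n × Fin m)) :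
    DupWins G H k q γ ↔
      ∀ φ : CForm (Fin k), CForm.qr φ ≤ q → (∀ i ∈ CForm.freeVars φ, (γ i).isSome) →
        (CForm.Sat G φ (fun i => (γ i).map Prod.fst) ↔
          CForm.Sat H φ (fun i => (γ i).map Prod.snd)) :=
  ⟨fun h φ hq hφ => h.agree φ ⟨hq, hφ⟩, fun h => dupWins_of_agree fun φ hφ => h φ hφ.1 hφ.2⟩

/-- Duplicator wins the `q`-round bijective `k`-pebble game from position `γ` iff `G` and
`H` satisfy the same `C^k_q`-formulae with free variables in the domain of `γ`,
interpreted along `γ`. -/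
theorem hella_bijective_game (k : ℕ) (hk : 1 ≤ k) (q : ℕ) {n m : ℕ}
    (G : SimpleGraph (Fin n)) (H : SimpleGraph (Fin m))
    (γ : Fin k → Option (Fin n × Fin m)) :
    DupWins G H k q γ ↔
      ∀ φ : CForm (Fin k), CForm.qr φ ≤ q → (∀ i ∈ CForm.freeVars φ, (γ i).isSome) →
        (CForm.Sat G φ (fun i => (γ i).map Prod.fst) ↔
          CForm.Sat H φ (fun i => (γ i).map Prod.snd)) :=
  hella_bijective_game_general k q G H γ
end
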